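/- arXiv:1403.0250 — 2 statements merged into one kernel-verified Lean document; each statement's English description precedes it below -/
import Mathlib

section
/- Let α, α′ and d be integers with d ≥ 0 and 1 ≤ α′ ≤ α, and fix positive integers r_0 = 1, r_1, …, r_{d+1} with r_{e−1} dividing r_e for each e. Then, as functions on {0,1}^α × {0,1}^α, ξ_d refines the function (v,w) ↦ ξ_d(π_{α′}(v), π_{α′}(w)). -/
/-!
Coloring machinery of Conlon–Fox–Lee–Sudakov. Vectors in `{0,1}^α` are modelled as
`Bool` lists of length `α`. Fix block lengths `r 0 = 1, r 1, …` with `r d ∣ r (d+1)`.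
-/

/-- The blocks of resolution with block length `r`: split a vector into consecutive
blocks of length `r` (the last block may be shorter). -/
def blocksOf (r : ℕ) (v : List Bool) : List (List Bool) := v.toChunks r

/-- The function `η_d` (with `r = r_d`): records the position `i` of the first pair of
differing blocks of resolution `d` together with the unordered pair `{v_i, w_i}` of
these blocks; it takes the value `none` (playing the role of `0`) when `v = w`. -/
def eta (r : ℕ) (v w : List Bool) : Option (ℕ × Sym2 (List Bool)) :=
  ((((blocksOf r v).zip (blocksOf r w)).zipIdx.map Prod.swap).find? (fun q => q.2.1 != q.2.2)).map
    (fun q => (q.1, s(q.2.1, q.2.2)))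

/-- The function `ξ_d`: apply `η_d` to each corresponding pair of blocks of
resolution `d+1`. -/
def xi (r : ℕ → ℕ) (d : ℕ) (v w : List Bool) : List (Option (ℕ × Sym2 (List Bool))) :=
  ((blocksOf (r (d+1)) v).zip (blocksOf (r (d+1)) w)).map fun q => eta (r d) q.1 q.2

/-- The type of colors used by the coloring `c_p`. -/
abbrev EGColor := List (List (Option (ℕ × Sym2 (List Bool))))

instance : DecidableEq (List (Option (ℕ × Sym2 (List Bool)))) := instDecidableEqList
instance : DecidableEq EGColor := instDecidableEqList

/-- The coloring `c_p (v,w) = (ξ_p(v,w), ξ_{p-1}(v,w), …, ξ_0(v,w))`. -/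
def cColor (r : ℕ → ℕ) (p : ℕ) (v w : List Bool) : EGColor :=
  (List.range (p+1)).map fun j => xi r (p - j) v w

/-- The set of colors appearing under `c_p` on (unordered) pairs of distinct
elements of `S`. -/
def colorsOn (r : ℕ → ℕ) (p : ℕ) (S : Finset (List Bool)) : Finset EGColor :=
  ((S ×ˢ S).filter fun q => q.1 ≠ q.2).image fun q => cColor r p q.1 q.2

/-- The vertex set `{0,1}^α`, realized as the set of all `Bool` lists of length `α`. -/
def allVecs (α : ℕ) : Finset (List Bool) :=
  Finset.univ.image fun v : Fin α → Bool => List.ofFn v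

/-- `alphaD rd α`: the largest multiple of `rd` that is strictly less than `α`
(for `α, rd ≥ 1`). -/
def alphaD (rd α : ℕ) : ℕ := rd * ((α - 1) / rd)

/-- The set `C_E^{(d)}` of emerging colors of `S` at resolution `d`: the unordered pairs
`{v'', w''}` of final segments of elements `v = (v', v'')`, `w = (w', w'')` of `S`
(split at `α_d`) with `v' = w'` and `v'' ≠ w''`. -/
def CEset (r : ℕ → ℕ) (α : ℕ) (S : Finset (List Bool)) (d : ℕ) : Finset (Sym2 (List Bool)) :=
  ((S ×ˢ S).filter fun q =>
      q.1.take (alphaD (r d) α) = q.2.take (alphaD (r d) α) ∧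
      q.1.drop (alphaD (r d) α) ≠ q.2.drop (alphaD (r d) α)).image
    fun q => s(q.1.drop (alphaD (r d) α), q.2.drop (alphaD (r d) α))

/-- The set `C_I^{(d)}` of inherited colors of `S` at resolution `d`: the pairs
`(c_p(v', w'), η_{d-1}(v'', w''))` over elements `v = (v', v'')`, `w = (w', w'')` of `S`
(split at `α_d`) with `v' ≠ w'`. -/
def CIset (r : ℕ → ℕ) (p α : ℕ) (S : Finset (List Bool)) (d : ℕ) :
    Finset (EGColor × Option (ℕ × Sym2 (List Bool))) :=
  ((S ×ˢ S).filter fun q =>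
      q.1.take (alphaD (r d) α) ≠ q.2.take (alphaD (r d) α)).image
    fun q => (cColor r p (q.1.take (alphaD (r d) α)) (q.2.take (alphaD (r d) α)),
              eta (r (d-1)) (q.1.drop (alphaD (r d) α)) (q.2.drop (alphaD (r d) α)))

/-!
Truncating both vectors at position `t` changes each value of `η` by a function of that value
alone: if `j` is the first block in which `v` and `w` differ, then the truncations first differ
in block `j`, cut to length `t - j * r_d`, unless the cut blocks agree, in which case the
truncations are equal. Blocks of resolution `d + 1` lying beyond `t` disappear, and the others
are cut, so `ξ_d` of the truncations is a function of `ξ_d` itself.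
-/

namespace List

variable {γ : Type*}

theorem toChunks_nil (n : ℕ) : toChunks n ([] : List γ) = [] := by
  cases n <;> rfl

-- `go` fills the partial chunk `acc₁` up to length `n` from `xs`, then chunks the rest afresh.
private theorem toChunks_go_eq (n : ℕ) (xs : List γ) :
    ∀ (acc₁ : Array γ) (acc₂ : Array (List γ)), 0 < acc₁.size → acc₁.size ≤ n →
      toChunks.go n xs acc₁ acc₂ =
        acc₂.toList ++ (acc₁.toList ++ xs.take (n - acc₁.size)) ::
          toChunks n (xs.drop (n - acc₁.size)) := by
  induction xs with
  | nil => intro acc₁ acc₂ _ _; simp [toChunks.go, toChunks_nil]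
  | cons x xs ih =>
    intro acc₁ acc₂ hpos hle
    rcases hle.lt_or_eq with hlt | hfull
    · rw [toChunks.go, if_neg (by simpa using hlt.ne),
        ih (acc₁.push x) acc₂ (by simp) (by simpa using hlt)]
      have hsub : n - acc₁.size = n - (acc₁.size + 1) + 1 := by omega
      simp [hsub]
    · obtain ⟨m, rfl⟩ : ∃ m, n = m + 1 := ⟨n - 1, by omega⟩
      have hstart :
          toChunks (m + 1) (x :: xs) = (x :: xs.take m) :: toChunks (m + 1) (xs.drop m) := by
        change toChunks.go (m + 1) xs #[x] #[] = _
        simpa using ih #[x] #[] (by simp) (by simp)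
      rw [toChunks.go, if_pos (by simpa using hfull),
        ih ((Array.mkEmpty (m + 1)).push x) (acc₂.push acc₁.toList) (by simp) (by simp)]
      simp [hfull, hstart]

theorem toChunks_of_ne_nil {n : ℕ} (hn : 0 < n) {l : List γ} (hl : l ≠ []) :
    toChunks n l = l.take n :: toChunks n (l.drop n) := by
  obtain ⟨x, xs, rfl⟩ := exists_cons_of_ne_nil hl
  obtain ⟨m, rfl⟩ : ∃ m, n = m + 1 := ⟨n - 1, by omega⟩
  change toChunks.go (m + 1) xs #[x] #[] = _
  simpa using toChunks_go_eq (m + 1) xs #[x] #[] (by simp) (by simp)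

end List

open List

section Eta

variable {s : ℕ}

@[simp]
theorem eta_nil_left (w : List Bool) : eta s [] w = none := by
  simp [eta, blocksOf, toChunks_nil]

@[simp]
theorem eta_nil_right (v : List Bool) : eta s v [] = none := by
  simp [eta, blocksOf, toChunks_nil]

theorem eta_of_ne_nil (hs : 0 < s) {b b' : List Bool} (hb : b ≠ []) (hb' : b' ≠ []) :
    eta s b b' =
      if b.take s = b'.take s then
        (eta s (b.drop s) (b'.drop s)).map fun q => (q.1 + 1, q.2)
      else some (0, s(b.take s, b'.take s)) := by
  unfold eta blocksOf
  rw [toChunks_of_ne_nil hs hb, toChunks_of_ne_nil hs hb', zip_cons_cons, zipIdx_cons, map_cons,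
    find?_cons]
  split_ifs with h
  · have hf : (take s b != take s b') = false := by simpa using h
    simp only [Prod.swap_prod_mk, hf, zipIdx_succ, find?_map, Option.map_map]
    rfl
  · have ht : (take s b != take s b') = true := by simpa using h
    simp only [Prod.swap_prod_mk, ht]
    rfl

def truncEta (s t : ℕ) : Option (ℕ × Sym2 (List Bool)) → Option (ℕ × Sym2 (List Bool))
  | none => none
  | some (j, p) =>
    if (p.map (take (t - j * s))).IsDiag then none else some (j, p.map (take (t - j * s)))

theorem truncEta_zero (x : Option (ℕ × Sym2 (List Bool))) : truncEta s 0 x = none := by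
  rcases x with _ | ⟨j, ⟨a, b⟩⟩ <;> simp [truncEta]

theorem truncEta_map_succ (t : ℕ) (x : Option (ℕ × Sym2 (List Bool))) :
    truncEta s t (x.map fun q => (q.1 + 1, q.2)) =
      (truncEta s (t - s) x).map fun q => (q.1 + 1, q.2) := by
  rcases x with _ | ⟨j, p⟩
  · rfl
  · have hcut : t - (j + 1) * s = t - s - j * s := by rw [Nat.sub_sub, add_mul, one_mul, add_comm]
    simp only [Option.map_some, truncEta, hcut]
    split_ifs <;> rfl

theorem eta_take (hs : 0 < s) (b b' : List Bool) (t : ℕ) :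
    eta s (b.take t) (b'.take t) = truncEta s t (eta s b b') := by
  rcases eq_or_ne b [] with rfl | hb
  · simp [truncEta]
  rcases eq_or_ne b' [] with rfl | hb'
  · simp [truncEta]
  rcases Nat.eq_zero_or_pos t with rfl | ht
  · simp [truncEta_zero]
  have hbt : b.take t ≠ [] := by simp [hb, ht.ne']
  have hbt' : b'.take t ≠ [] := by simp [hb', ht.ne']
  have hcut : ∀ l : List Bool, (l.take s).take t = l.take (min s t) := by
    intro l; rw [take_take, min_comm]
  rw [eta_of_ne_nil hs hbt hbt', eta_of_ne_nil hs hb hb', take_take, take_take, drop_take,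
    drop_take]
  by_cases heq : b.take s = b'.take s
  · have heqt : b.take (min s t) = b'.take (min s t) := by rw [← hcut, ← hcut, heq]
    rw [if_pos heqt, if_pos heq, eta_take hs (b.drop s) (b'.drop s) (t - s), truncEta_map_succ]
  by_cases heqt : b.take (min s t) = b'.take (min s t)
  · have hts : t < s := by
      by_contra! hst
      rw [min_eq_left hst] at heqt
      exact heq heqt
    rw [if_pos heqt, if_neg heq, Nat.sub_eq_zero_of_le hts.le, take_zero, take_zero, eta_nil_left]
    simp [truncEta, hcut, heqt]
  · rw [if_neg heqt, if_neg heq]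
    simp [truncEta, hcut, heqt]
termination_by b.length
decreasing_by simpa using Nat.sub_lt (length_pos_iff.2 hb) hs

end Eta

section Xi

variable (r : ℕ → ℕ) (d : ℕ)

@[simp]
theorem xi_nil_left (w : List Bool) : xi r d [] w = [] := by
  simp [xi, blocksOf, toChunks_nil]

@[simp]
theorem xi_nil_right (v : List Bool) : xi r d v [] = [] := by
  simp [xi, blocksOf, toChunks_nil]

theorem xi_of_ne_nil (hR : 0 < r (d + 1)) {v w : List Bool} (hv : v ≠ []) (hw : w ≠ []) :
    xi r d v w =
      eta (r d) (v.take (r (d + 1))) (w.take (r (d + 1))) ::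
        xi r d (v.drop (r (d + 1))) (w.drop (r (d + 1))) := by
  simp only [xi, blocksOf, toChunks_of_ne_nil hR hv, toChunks_of_ne_nil hR hw, zip_cons_cons,
    map_cons]

def truncXi (R s : ℕ) : ℕ → List (Option (ℕ × Sym2 (List Bool))) →
    List (Option (ℕ × Sym2 (List Bool)))
  | 0, _ => []
  | _, [] => []
  | t + 1, e :: es => truncEta s (t + 1) e :: truncXi R s (t + 1 - R) es

theorem xi_take (hs : 0 < r d) (hR : 0 < r (d + 1)) (v w : List Bool) (t : ℕ) :
    xi r d (v.take t) (w.take t) = truncXi (r (d + 1)) (r d) t (xi r d v w) := by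
  rcases t with _ | t
  · simp [truncXi]
  rcases eq_or_ne v [] with rfl | hv
  · simp [truncXi]
  rcases eq_or_ne w [] with rfl | hw
  · simp [truncXi]
  have hcut : ∀ l : List Bool,
      (l.take (t + 1)).take (r (d + 1)) = (l.take (r (d + 1))).take (t + 1) := by
    intro l; rw [take_take, take_take, min_comm]
  rw [xi_of_ne_nil r d hR (by simp [hv]) (by simp [hw]), xi_of_ne_nil r d hR hv hw, truncXi,
    hcut, hcut, eta_take hs, drop_take, drop_take, xi_take hs hR (v.drop _) (w.drop _)]
termination_by v.length
decreasing_by simpa using Nat.sub_lt (length_pos_iff.2 hv) hR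

end Xi

theorem stmt6_general (α' d : ℕ) (r : ℕ → ℕ) (hrpos : ∀ e, 0 < r e) (v w x y : List Bool)
    (h : xi r d v w = xi r d x y) :
    xi r d (v.take α') (w.take α') = xi r d (x.take α') (y.take α') := by
  rw [xi_take r d (hrpos d) (hrpos (d + 1)), xi_take r d (hrpos d) (hrpos (d + 1)), h]

/-- **Lemma 4.2(ii).** For `d ≥ 0` and `1 ≤ α' ≤ α`, the function `ξ_d` refines
`(v, w) ↦ ξ_d(π_{α'}(v), π_{α'}(w))` on `{0,1}^α × {0,1}^α`. -/
theorem stmt6 (α α' d : ℕ) (hα' : 1 ≤ α') (hα : α' ≤ α) (r : ℕ → ℕ) (hr0 : r 0 = 1)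
    (hrpos : ∀ e, 0 < r e) (hrdvd : ∀ e, r e ∣ r (e + 1))
    (v w x y : List Bool) (hv : v.length = α) (hw : w.length = α)
    (hx : x.length = α) (hy : y.length = α)
    (h : xi r d v w = xi r d x y) :
    xi r d (v.take α') (w.take α') = xi r d (x.take α') (y.take α') :=
  stmt6_general α' d r hrpos v w x y h
end

section
/- Let p ≥ 1 and α be positive integers, fix parameters r_0 = 1, r_1, …, r_{p+1} with r_{e−1} dividing r_e for each e, and let S ⊆ {0,1}^α be a set with |S| ≤ p+3. If |C_I^{(p)}| + |C_E^{(p)}| ≤ |S| − 2, then there exists an index d with 1 ≤ d ≤ p such that η_{d−1} is injective on C_E^{(d)}: distinct unordered pairs {v″, w″} ∈ C_E^{(d)} have distinct values η_{d−1}(v″, w″). -/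
/-!
Suppose that for every `1 ≤ d ≤ p` some two distinct pairs of `C_E^{(d)}` have the same value of
`η_{d-1}`. A pair `{v″, w″}` of `C_E^{(d-1)}` lifts to the pair of `C_E^{(d)}` obtained by
splitting the same `v, w ∈ S` at `α_d ≤ α_{d-1}` instead; its two members agree on all blocks of
resolution `d-1` but the last one, which is the original pair, so `η_{d-1}` maps the lift to
`(k, {v″, w″})` for one fixed index `k`. Hence `|C_E^{(d-1)}| ≤ |η_{d-1}(C_E^{(d)})| < |C_E^{(d)}|`,
and since `|C_E^{(1)}| ≥ 2` we get `|C_E^{(p)}| ≥ p + 1`. With `|S| ≤ p + 3` the hypothesis then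
forces `C_I^{(p)} = ∅`: all elements of `S` share the prefix `v′_p`, so fixing one `v₀ ∈ S` the
pairs `{v₀″, w″}` give `|C_E^{(p)}| ≥ |S| - 1`, contradicting `|C_E^{(p)}| ≤ |S| - 2`.
-/

namespace List

variable {α : Type*}

lemma toChunks_go_eq_append (n : ℕ) :
    ∀ (xs : List α) (acc₁ : Array α) (acc₂ : Array (List α)),
      toChunks.go n xs acc₁ acc₂ = acc₂.toList ++ toChunks.go n xs acc₁ #[] := by
  intro xs
  induction xs with
  | nil => simp [toChunks.go]
  | cons x xs ih =>
    intro acc₁ acc₂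
    simp only [toChunks.go]
    split_ifs
    · rw [ih, ih _ (#[].push _)]; simp
    · rw [ih, ih _ #[]]

lemma toChunks_go_of_size_add_length_le {n : ℕ} :
    ∀ (ys : List α) (acc₁ : Array α), acc₁.size + ys.length ≤ n →
      toChunks.go n ys acc₁ #[] = [acc₁.toList ++ ys] := by
  intro ys
  induction ys with
  | nil => intro acc₁ _; simp [toChunks.go]
  | cons y ys ih =>
    intro acc₁ h
    simp only [length_cons] at h
    rw [toChunks.go, if_neg (by simp; omega), ih _ (by simp; omega)]
    simp

lemma toChunks_go_append {n : ℕ} (hn : 0 < n) (zs : List α) :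
    ∀ (ys : List α) (acc₁ : Array α), acc₁.size + ys.length = n →
      toChunks.go n (ys ++ zs) acc₁ #[] = (acc₁.toList ++ ys) :: zs.toChunks n := by
  intro ys
  induction ys with
  | nil =>
    intro acc₁ h
    cases zs with
    | nil => simp [toChunks.go, toChunks]
    | cons z zs =>
      obtain ⟨m, rfl⟩ : ∃ m, n = m + 1 := ⟨n - 1, by omega⟩
      simp only [length_nil, add_zero] at h
      rw [nil_append, toChunks.go, if_pos (by simp [h]), toChunks_go_eq_append]
      simp [toChunks, Array.mkEmpty_eq]
  | cons y ys ih =>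
    intro acc₁ h
    simp only [length_cons] at h
    rw [cons_append, toChunks.go, if_neg (by simp; omega), ih _ (by simp; omega)]
    simp

lemma toChunks_of_length_le {n : ℕ} {l : List α} (hl : l ≠ []) (h : l.length ≤ n) :
    l.toChunks n = [l] := by
  obtain ⟨x, xs, rfl⟩ := exists_cons_of_ne_nil hl
  obtain ⟨m, rfl⟩ : ∃ m, n = m + 1 := ⟨n - 1, by simp at h; omega⟩
  change toChunks.go (m + 1) xs #[x] #[] = _
  rw [toChunks_go_of_size_add_length_le _ _ (by simp at h ⊢; omega)]
  simp

lemma toChunks_append_of_length_eq {n : ℕ} (hn : 0 < n) {l : List α} (hl : l.length = n)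
    (l' : List α) : (l ++ l').toChunks n = l :: l'.toChunks n := by
  obtain ⟨x, xs, rfl⟩ := exists_cons_of_ne_nil (ne_nil_of_length_pos (hl ▸ hn))
  obtain ⟨m, rfl⟩ : ∃ m, n = m + 1 := ⟨n - 1, by omega⟩
  change toChunks.go (m + 1) (xs ++ l') #[x] #[] = _
  rw [toChunks_go_append hn _ _ _ (by simp at hl ⊢; omega)]
  simp

lemma toChunks_append_of_dvd {n : ℕ} {l t : List α} (hl : n ∣ l.length) (ht : t ≠ [])
    (htn : t.length ≤ n) : (l ++ t).toChunks n = l.toChunks n ++ [t] := by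
  have hn : 0 < n := lt_of_lt_of_le (length_pos_iff.mpr ht) htn
  obtain ⟨k, hk⟩ := hl
  induction k generalizing l with
  | zero =>
    rw [eq_nil_of_length_eq_zero hk, nil_append, toChunks_of_length_le ht htn]
    simp [toChunks]
  | succ k ih =>
    have hnl : n ≤ l.length := by rw [hk]; exact Nat.le_mul_of_pos_right n k.succ_pos
    rw [← take_append_drop n l, append_assoc,
      toChunks_append_of_length_eq hn (length_take_of_le hnl),
      toChunks_append_of_length_eq hn (length_take_of_le hnl),
      ih (by rw [length_drop, hk, Nat.mul_succ, Nat.add_sub_cancel])]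
    rfl

lemma length_toChunks_of_dvd {n : ℕ} (hn : 0 < n) {l : List α} (hl : n ∣ l.length) :
    (l.toChunks n).length = l.length / n := by
  obtain ⟨k, hk⟩ := hl
  induction k generalizing l with
  | zero => simp [eq_nil_of_length_eq_zero hk, toChunks]
  | succ k ih =>
    have hnl : n ≤ l.length := by rw [hk]; exact Nat.le_mul_of_pos_right n k.succ_pos
    rw [← take_append_drop n l, toChunks_append_of_length_eq hn (length_take_of_le hnl),
      length_cons, ih (by rw [length_drop, hk, Nat.mul_succ, Nat.add_sub_cancel]),
      length_drop, hk, Nat.mul_succ, Nat.add_sub_cancel, take_append_drop, hk,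
      Nat.mul_div_cancel_left _ hn, Nat.mul_div_cancel_left _ hn]

lemma eq_of_take_eq_of_drop_eq {l l' : List α} {n : ℕ}
    (h₁ : l.take n = l'.take n) (h₂ : l.drop n = l'.drop n) : l = l' := by
  rw [← take_append_drop n l, h₁, h₂, take_append_drop]

end List

lemma eta_comm (r : ℕ) (v w : List Bool) : eta r v w = eta r w v := by
  unfold eta
  rw [← List.zip_swap, List.zipIdx_map, List.map_map, List.find?_map, List.find?_map,
    Option.map_map, Option.map_map]
  congr 1
  · funext ⟨⟨a, b⟩, i⟩
    simp [Sym2.eq_swap]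
  · congr 1
    funext ⟨⟨a, b⟩, i⟩
    simp [bne_comm]

lemma eta_of_blocksOf_eq_append {r : ℕ} {v w t t' : List Bool} {B : List (List Bool)}
    (hv : blocksOf r v = B ++ [t]) (hw : blocksOf r w = B ++ [t']) (h : t ≠ t') :
    eta r v w = some (B.length, s(t, t')) := by
  unfold eta
  have hdiag : B.zip B = B.map (fun b => (b, b)) := by
    simpa using List.zip_map' (l := B) (f := id) (g := id)
  rw [hv, hw, List.zip_append rfl, List.zipIdx_append, List.map_append, List.find?_append,
    List.find?_eq_none.mpr fun q hq => ?_]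
  · simp [hdiag, h]
  obtain ⟨⟨⟨a, b⟩, i⟩, hmem, rfl⟩ := List.mem_map.mp hq
  obtain ⟨c, -, hc⟩ := List.mem_map.mp (hdiag ▸ List.fst_mem_of_mem_zipIdx hmem)
  obtain ⟨rfl, rfl⟩ := Prod.mk.inj hc
  simp

lemma eta_append_append {r : ℕ} {P t t' : List Bool} (hP : r ∣ P.length)
    (hlen : t.length = t'.length) (htr : t.length ≤ r) (h : t ≠ t') :
    eta r (P ++ t) (P ++ t') = some (P.length / r, s(t, t')) := by
  have ht : t ≠ [] := fun ht => h (by simp_all [eq_comm (a := 0)])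
  have ht' : t' ≠ [] := fun ht' => h (by simp_all)
  have hr : 0 < r := lt_of_lt_of_le (List.length_pos_iff.mpr ht) htr
  rw [eta_of_blocksOf_eq_append (List.toChunks_append_of_dvd hP ht htr)
    (List.toChunks_append_of_dvd hP ht' (hlen ▸ htr)) h, List.length_toChunks_of_dvd hr hP]

def etaSym (r : ℕ) : Sym2 (List Bool) → Option (ℕ × Sym2 (List Bool)) :=
  Sym2.lift ⟨eta r, eta_comm r⟩

lemma alphaD_le (rd α : ℕ) : alphaD rd α ≤ α :=
  (Nat.mul_div_le (α - 1) rd).trans (Nat.sub_le α 1)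

lemma dvd_alphaD (rd α : ℕ) : rd ∣ alphaD rd α := Dvd.intro _ rfl

lemma sub_alphaD_le {rd : ℕ} (hrd : 0 < rd) (α : ℕ) : α - alphaD rd α ≤ rd := by
  have := Nat.div_add_mod (α - 1) rd
  have := Nat.mod_lt (α - 1) hrd
  unfold alphaD
  omega

lemma alphaD_le_alphaD_of_dvd {ρ rd : ℕ} (hρ : 0 < ρ) (h : ρ ∣ rd) (α : ℕ) :
    alphaD rd α ≤ alphaD ρ α := by
  obtain ⟨k, hk⟩ := h.trans (dvd_alphaD rd α)
  have hle : alphaD rd α ≤ α - 1 := Nat.mul_div_le (α - 1) rd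
  rw [hk, alphaD]
  exact Nat.mul_le_mul_left ρ
    ((Nat.le_div_iff_mul_le hρ).mpr (by rw [mul_comm, ← hk]; exact hle))

section Colors

variable {r : ℕ → ℕ} {α : ℕ} {S : Finset (List Bool)}

lemma exists_etaSym_eq_of_mem_CEset (hS : ∀ v ∈ S, v.length = α) {e : ℕ} (hr : 0 < r e)
    (hdvd : r e ∣ r (e + 1)) {u : Sym2 (List Bool)} (hu : u ∈ CEset r α S e) :
    ∃ z ∈ CEset r α S (e + 1),
      etaSym (r e) z = some ((alphaD (r e) α - alphaD (r (e + 1)) α) / r e, u) := by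
  obtain ⟨⟨V, W⟩, hmem, rfl⟩ := Finset.mem_image.mp hu
  simp only [Finset.mem_filter, Finset.mem_product] at hmem
  obtain ⟨⟨hV, hW⟩, htake, hdrop⟩ := hmem
  set a := alphaD (r e) α
  set b := alphaD (r (e + 1)) α
  have hba : b ≤ a := alphaD_le_alphaD_of_dvd hr hdvd α
  have haα : a ≤ α := alphaD_le _ α
  have hsplit : ∀ X ∈ S, X.drop b = (X.take a).drop b ++ X.drop a := fun X hX => by
    rw [← List.drop_append_of_le_length (by simp [hS X hX, hba, haα]), List.take_append_drop]
  have hV' := hsplit V hV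
  have hW' : W.drop b = (V.take a).drop b ++ W.drop a := htake ▸ hsplit W hW
  -- `P` is `(a - b) / r e` whole blocks of resolution `e`; the tails past `a` form the last block
  set P := (V.take a).drop b
  have hPlen : P.length = a - b := by simp [P, hS V hV, haα]
  refine ⟨s(V.drop b, W.drop b), Finset.mem_image.mpr ⟨(V, W), ?_, rfl⟩, ?_⟩
  · simp only [Finset.mem_filter, Finset.mem_product]
    refine ⟨⟨hV, hW⟩, ?_, ?_⟩
    · have h := congrArg (List.take b) htake
      rwa [List.take_take, List.take_take, min_eq_left hba] at h
    · rw [hV', hW']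
      exact fun h => hdrop (List.append_cancel_left h)
  · change eta _ _ _ = _
    rw [hV', hW', eta_append_append, hPlen]
    · rw [hPlen]
      exact Nat.dvd_sub (dvd_alphaD _ α) (hdvd.trans (dvd_alphaD _ α))
    · simp [hS V hV, hS W hW]
    · simpa [hS V hV] using sub_alphaD_le hr α
    · exact hdrop

lemma card_CEset_lt_card_CEset_succ (hS : ∀ v ∈ S, v.length = α) {e : ℕ} (hr : 0 < r e)
    (hdvd : r e ∣ r (e + 1)) (hnot : ¬ Set.InjOn (etaSym (r e)) (CEset r α S (e + 1))) :
    (CEset r α S e).card < (CEset r α S (e + 1)).card := by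
  set k := (alphaD (r e) α - alphaD (r (e + 1)) α) / r e
  calc (CEset r α S e).card
      = ((CEset r α S e).image fun u => some (k, u)).card :=
        (Finset.card_image_of_injective _ fun u u' h => by simpa using h).symm
    _ ≤ ((CEset r α S (e + 1)).image (etaSym (r e))).card := by
        refine Finset.card_le_card fun c hc => ?_
        obtain ⟨u, hu, rfl⟩ := Finset.mem_image.mp hc
        obtain ⟨z, hz, hzu⟩ := exists_etaSym_eq_of_mem_CEset hS hr hdvd hu
        exact Finset.mem_image.mpr ⟨z, hz, hzu⟩
    _ < (CEset r α S (e + 1)).card :=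
        lt_of_le_of_ne Finset.card_image_le (mt Finset.card_image_iff.mp hnot)

lemma add_two_le_card_CEset (hS : ∀ v ∈ S, v.length = α) (n : ℕ)
    (hr : ∀ e ≤ n, 0 < r e) (hdvd : ∀ e ≤ n, r e ∣ r (e + 1))
    (hnot : ∀ e ≤ n, ¬ Set.InjOn (etaSym (r e)) (CEset r α S (e + 1))) :
    n + 2 ≤ (CEset r α S (n + 1)).card := by
  induction n with
  | zero =>
    by_contra hle
    exact hnot 0 le_rfl fun z hz z' hz' _ => Finset.card_le_one.mp (by omega) z hz z' hz'
  | succ n ih =>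
    have := card_CEset_lt_card_CEset_succ hS (hr (n + 1) le_rfl) (hdvd (n + 1) le_rfl)
      (hnot (n + 1) le_rfl)
    have := ih (fun e he => hr e (by omega)) (fun e he => hdvd e (by omega))
      (fun e he => hnot e (by omega))
    omega

lemma card_le_card_CEset_add_one {p d : ℕ} (hCI : CIset r p α S d = ∅) :
    S.card ≤ (CEset r α S d).card + 1 := by
  have htake : ∀ v ∈ S, ∀ w ∈ S, v.take (alphaD (r d) α) = w.take (alphaD (r d) α) := by
    rw [CIset, Finset.image_eq_empty, Finset.filter_eq_empty_iff] at hCI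
    exact fun v hv w hw => not_not.mp (@hCI (v, w) (Finset.mem_product.mpr ⟨hv, hw⟩))
  set a := alphaD (r d) α
  rcases S.eq_empty_or_nonempty with rfl | ⟨v₀, hv₀⟩
  · simp
  rw [← Finset.card_erase_add_one hv₀, add_le_add_iff_right]
  refine Finset.card_le_card_of_injOn (fun w => s(v₀.drop a, w.drop a)) (fun w hw => ?_)
    (fun w hw w' hw' h => ?_)
  · obtain ⟨hwv, hw⟩ := Finset.mem_erase.mp hw
    refine Finset.mem_image.mpr ⟨(v₀, w), ?_, rfl⟩
    simp only [Finset.mem_filter, Finset.mem_product]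
    exact ⟨⟨hv₀, hw⟩, htake v₀ hv₀ w hw,
      fun h => hwv (List.eq_of_take_eq_of_drop_eq (htake w hw v₀ hv₀) h.symm)⟩
  · exact List.eq_of_take_eq_of_drop_eq (htake w (Finset.mem_of_mem_erase hw) w'
      (Finset.mem_of_mem_erase hw')) (Sym2.congr_right.mp h)

end Colors

theorem stmt10_general (p α : ℕ) (hp : 1 ≤ p) (r : ℕ → ℕ)
    (hrpos : ∀ e ≤ p + 1, 0 < r e) (hrdvd : ∀ e < p + 1, r e ∣ r (e + 1))
    (S : Finset (List Bool)) (hS : ∀ v ∈ S, v.length = α) (hcard : S.card ≤ p + 3)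
    (h : (CIset r p α S p).card + (CEset r α S p).card + 2 ≤ S.card) :
    ∃ d, 1 ≤ d ∧ d ≤ p ∧
      ∀ v w x y : List Bool, s(v, w) ∈ CEset r α S d → s(x, y) ∈ CEset r α S d →
        eta (r (d - 1)) v w = eta (r (d - 1)) x y → s(v, w) = s(x, y) := by
  obtain ⟨n, rfl⟩ : ∃ n, p = n + 1 := ⟨p - 1, by omega⟩
  by_contra hcon
  have hnot : ∀ e ≤ n, ¬ Set.InjOn (etaSym (r e)) (CEset r α S (e + 1)) :=
    fun e he hinj => hcon ⟨e + 1, by omega, by omega, fun _ _ _ _ hvw hxy heq =>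
      hinj hvw hxy (by rwa [Nat.add_sub_cancel] at heq)⟩
  have hCE := add_two_le_card_CEset hS n (fun e he => hrpos e (by omega))
    (fun e he => hrdvd e (by omega)) hnot
  have hCI : CIset r (n + 1) α S (n + 1) = ∅ := Finset.card_eq_zero.mp (by omega)
  have := card_le_card_CEset_add_one hCI
  omega

/-- **Claim 5.1.** Let `S ⊆ {0,1}^α` with `|S| ≤ p+3`. If
`|C_I^{(p)}| + |C_E^{(p)}| ≤ |S| − 2`, then there is an index `1 ≤ d ≤ p` such that
`η_{d−1}` is injective on `C_E^{(d)}`: distinct unordered pairs in `C_E^{(d)}` have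
distinct values of `η_{d−1}`. -/
theorem stmt10 (p α : ℕ) (hp : 1 ≤ p) (hα : 1 ≤ α) (r : ℕ → ℕ) (hr0 : r 0 = 1)
    (hrpos : ∀ e ≤ p + 1, 0 < r e) (hrdvd : ∀ e < p + 1, r e ∣ r (e + 1))
    (S : Finset (List Bool)) (hS : ∀ v ∈ S, v.length = α) (hcard : S.card ≤ p + 3)
    (h : (CIset r p α S p).card + (CEset r α S p).card + 2 ≤ S.card) :
    ∃ d, 1 ≤ d ∧ d ≤ p ∧
      ∀ v w x y : List Bool, s(v, w) ∈ CEset r α S d → s(x, y) ∈ CEset r α S d →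
        eta (r (d - 1)) v w = eta (r (d - 1)) x y → s(v, w) = s(x, y) :=
  stmt10_general p α hp r hrpos hrdvd S hS hcard h
end
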